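/- (Reconstruction error for non-bandlimited signals.) Let B and D be two orthogonal projectors on ℝ^N with ‖B D^c‖₂ < 1, where D^c := I − D and B^c := I − B. Let ψ_1, …, ψ_N be an orthonormal basis of ℝ^N of eigenvectors of B·D·B with B·D·B ψ_i = σ_i² ψ_i. For an arbitrary signal f ∈ ℝ^N, let f̃ := Σ_{i : σ_i² ≠ 0} (1/σ_i²) ⟨Df, ψ_i⟩ ψ_i be its reconstruction from the samples Df. Then the squared reconstruction error decomposes as ‖f − f̃‖² = ‖B^c f‖² + Σ_{i : σ_i² ≠ 0} (1/σ_i⁴) |⟨D B^c f, ψ_i⟩|², i.e., the sum of the out-of-band energy of f and the aliasing error induced in band by the out-of-band components. -/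

import Mathlib

open Matrix

/-! In the orthonormal eigenbasis `ψ` of `B D B`, the eigenvectors with `σ² ≠ 0` lie in the range
of `B`, and those with `σ² = 0` lie in its kernel: such a `ψ` has `D (B ψ) = 0`, so `B ψ` is a
fixed vector of `B (I − D)`, which the bound `‖B D^c‖₂ < 1` forces to vanish. Hence the
coordinates of `B^c f` are those of `f` on the kernel part and `0` elsewhere, while on the range
part the samples read `⟨D f, ψ⟩ = σ² ⟨f, ψ⟩ + ⟨D B^c f, ψ⟩`, so the coordinate of `f − f̃` is
`−⟨D B^c f, ψ⟩ / σ²`. Parseval in the basis `ψ` adds up the two contributions. -/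

/-- The spectral norm of a real `N × N` matrix: the operator norm of the induced
linear map on `ℝ^N` with the Euclidean norm. -/
noncomputable def matSpectralNorm {N : ℕ} (M : Matrix (Fin N) (Fin N) ℝ) : ℝ :=
  ‖Matrix.toEuclideanCLM (𝕜 := ℝ) M‖

/-- The squared Euclidean norm of a vector in `ℝ^N`. -/
def sqNorm {N : ℕ} (v : Fin N → ℝ) : ℝ := v ⬝ᵥ v

namespace Matrix

variable {n R : Type*} [Fintype n]

theorem mulVec_dotProduct_of_isSymm [CommSemiring R] {M : Matrix n n R} (hM : M.IsSymm)
    (v w : n → R) : M *ᵥ v ⬝ᵥ w = v ⬝ᵥ M *ᵥ w := by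
  rw [dotProduct_mulVec, ← mulVec_transpose, hM.eq]

theorem sum_smul_dotProduct_of_orthonormal [CommSemiring R] {ι : Type*} [DecidableEq ι]
    {ψ : ι → n → R} (horth : ∀ i j, ψ i ⬝ᵥ ψ j = if i = j then 1 else 0)
    (s : Finset ι) (c : ι → R) (j : ι) :
    (∑ i ∈ s, c i • ψ i) ⬝ᵥ ψ j = if j ∈ s then c j else 0 := by
  simp [sum_dotProduct, smul_dotProduct, horth]

theorem dotProduct_self_eq_sum_sq_of_orthonormal [CommRing R] [DecidableEq n] {ψ : n → n → R}
    (horth : ∀ i j, ψ i ⬝ᵥ ψ j = if i = j then 1 else 0) (v : n → R) :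
    v ⬝ᵥ v = ∑ i, (v ⬝ᵥ ψ i) ^ 2 := by
  have hrows : of ψ * (of ψ)ᵀ = 1 := by
    ext i j
    simpa [mul_apply, one_apply, dotProduct] using horth i j
  have hcols : (of ψ)ᵀ * of ψ = 1 := mul_eq_one_comm.mp hrows
  calc v ⬝ᵥ v = v ⬝ᵥ ((of ψ)ᵀ * of ψ) *ᵥ v := by rw [hcols, one_mulVec]
    _ = of ψ *ᵥ v ⬝ᵥ of ψ *ᵥ v := by rw [← mulVec_mulVec, dotProduct_mulVec, vecMul_transpose]
    _ = ∑ i, (v ⬝ᵥ ψ i) ^ 2 := by simp [dotProduct, mulVec, sq, mul_comm]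

theorem mulVec_eq_self_of_mul_eq_of_mulVec_eq_smul [Field R] {B M : Matrix n n R}
    (hBM : B * M = M) {v : n → R} {σ : R} (hv : M *ᵥ v = σ • v) (hσ : σ ≠ 0) :
    B *ᵥ v = v := by
  have h : σ • B *ᵥ v = σ • v := by rw [← mulVec_smul, ← hv, mulVec_mulVec, hBM]
  exact smul_right_injective _ hσ h

/-- For orthogonal projectors, `B D B = (D B)ᵀ (D B)`, so its kernel is that of `D B`. -/
theorem mulVec_mulVec_eq_zero_of_mul_mul_mulVec_eq_zero [Field R] [LinearOrder R]
    [IsStrictOrderedRing R] {B D : Matrix n n R} (hB : B.IsSymm) (hD : D.IsSymm)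
    (hDidem : D * D = D) {v : n → R} (hv : (B * D * B) *ᵥ v = 0) : D *ᵥ B *ᵥ v = 0 := by
  have hBDB : (D * B)ᵀ * (D * B) = B * D * B := by
    rw [transpose_mul, hB.eq, hD.eq, mul_assoc, ← mul_assoc D, hDidem, mul_assoc]
  have hmem : v ∈ LinearMap.ker ((D * B)ᵀ * (D * B)).mulVecLin := by
    rwa [LinearMap.mem_ker, mulVecLin_apply, hBDB]
  rwa [ker_mulVecLin_transpose_mul_self, LinearMap.mem_ker, mulVecLin_apply,
    ← mulVec_mulVec] at hmem

theorem mulVec_dotProduct_eq_of_mulVec_eq_smul [CommRing R] [DecidableEq n]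
    {B D : Matrix n n R} (hB : B.IsSymm) (hD : D.IsSymm) {ψ : n → R} {σ : R}
    (hBψ : B *ᵥ ψ = ψ) (heig : (B * D * B) *ᵥ ψ = σ • ψ) (f : n → R) :
    D *ᵥ f ⬝ᵥ ψ = σ * (f ⬝ᵥ ψ) + D *ᵥ (1 - B) *ᵥ f ⬝ᵥ ψ := by
  calc D *ᵥ f ⬝ᵥ ψ = D *ᵥ B *ᵥ f ⬝ᵥ ψ + D *ᵥ (1 - B) *ᵥ f ⬝ᵥ ψ := by
        rw [← add_dotProduct, ← mulVec_add, ← add_mulVec, add_sub_cancel, one_mulVec]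
    _ = f ⬝ᵥ (B * D * B) *ᵥ ψ + D *ᵥ (1 - B) *ᵥ f ⬝ᵥ ψ := by
        rw [mulVec_dotProduct_of_isSymm hD, mulVec_dotProduct_of_isSymm hB,
          ← mulVec_mulVec, ← mulVec_mulVec, hBψ]
    _ = σ * (f ⬝ᵥ ψ) + D *ᵥ (1 - B) *ᵥ f ⬝ᵥ ψ := by rw [heig, dotProduct_smul, smul_eq_mul]

end Matrix

theorem ContinuousLinearMap.eq_zero_of_apply_eq_self_of_norm_lt_one {𝕜 E : Type*}
    [NontriviallyNormedField 𝕜] [NormedAddCommGroup E] [NormedSpace 𝕜 E] {T : E →L[𝕜] E}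
    (hT : ‖T‖ < 1) {x : E} (hx : T x = x) : x = 0 := by
  have hle : ‖x‖ ≤ ‖T‖ * ‖x‖ := by simpa only [hx] using T.le_opNorm x
  exact norm_le_zero_iff.mp (by nlinarith [norm_nonneg x])

theorem eq_zero_of_mulVec_eq_self_of_matSpectralNorm_lt_one {N : ℕ}
    {M : Matrix (Fin N) (Fin N) ℝ} (hM : matSpectralNorm M < 1) {x : Fin N → ℝ}
    (hx : M *ᵥ x = x) : x = 0 := by
  have hfix : toEuclideanCLM (𝕜 := ℝ) M (WithLp.toLp 2 x) = WithLp.toLp 2 x := by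
    rw [toEuclideanCLM_toLp, hx]
  simpa using ContinuousLinearMap.eq_zero_of_apply_eq_self_of_norm_lt_one hM hfix

theorem mulVec_eq_zero_of_mulVec_mulVec_eq_zero_of_matSpectralNorm_lt_one {N : ℕ} {B D : Matrix (Fin N) (Fin N) ℝ}
    (hBidem : B * B = B) (hnorm : matSpectralNorm (B * (1 - D)) < 1) {v : Fin N → ℝ}
    (hv : D *ᵥ B *ᵥ v = 0) : B *ᵥ v = 0 := by
  refine eq_zero_of_mulVec_eq_self_of_matSpectralNorm_lt_one hnorm ?_
  rw [← mulVec_mulVec, sub_mulVec, one_mulVec, hv, sub_zero, mulVec_mulVec, hBidem]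

/-- **Reconstruction error for non-bandlimited signals.**
Let `B` and `D` be orthogonal projectors on `ℝ^N` with `‖B D^c‖₂ < 1`, where
`D^c := I − D`, `B^c := I − B`, and let `ψ 1, …, ψ N` be an orthonormal basis of
eigenvectors of `B·D·B` with `B·D·B ψ i = σ² i • ψ i`. For an arbitrary signal `f`, let
`f̃ := Σ_{i : σ² i ≠ 0} (1/σ² i) ⟨Df, ψ i⟩ ψ i` be its reconstruction from the samples
`Df`. Then the squared reconstruction error decomposes as
`‖f − f̃‖² = ‖B^c f‖² + Σ_{i : σ² i ≠ 0} (1/σ⁴ i) |⟨D B^c f, ψ i⟩|²`: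
the out-of-band energy of `f` plus the aliasing error induced in band by the out-of-band
components. -/
theorem reconstruction_error_decomposition
    {N : ℕ} (B D : Matrix (Fin N) (Fin N) ℝ)
    (hBsym : B.transpose = B) (hDsym : D.transpose = D)
    (hBidem : B * B = B) (hDidem : D * D = D)
    (hnorm : matSpectralNorm (B * (1 - D)) < 1)
    (ψ : Fin N → (Fin N → ℝ)) (σsq : Fin N → ℝ)
    (horth : ∀ i j, ψ i ⬝ᵥ ψ j = if i = j then (1 : ℝ) else 0)
    (heig : ∀ i, (B * D * B).mulVec (ψ i) = σsq i • ψ i)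
    (f : Fin N → ℝ)
    (ftilde : Fin N → ℝ)
    (hftilde : ftilde = ∑ i ∈ Finset.univ.filter (fun i => σsq i ≠ 0),
        ((D.mulVec f ⬝ᵥ ψ i) / σsq i) • ψ i) :
    sqNorm (f - ftilde)
      = sqNorm ((1 - B).mulVec f) +
        ∑ i ∈ Finset.univ.filter (fun i => σsq i ≠ 0),
          (D.mulVec ((1 - B).mulVec f) ⬝ᵥ ψ i) ^ 2 / (σsq i) ^ 2 := by
  have hBψ : ∀ i, σsq i ≠ 0 → B *ᵥ ψ i = ψ i := fun i =>
    mulVec_eq_self_of_mul_eq_of_mulVec_eq_smul (by rw [← mul_assoc, ← mul_assoc, hBidem]) (heig i)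
  have hBψ₀ : ∀ i, σsq i = 0 → B *ᵥ ψ i = 0 := fun i hi =>
    mulVec_eq_zero_of_mulVec_mulVec_eq_zero_of_matSpectralNorm_lt_one hBidem hnorm <|
      mulVec_mulVec_eq_zero_of_mul_mul_mulVec_eq_zero hBsym hDsym hDidem (by simp [heig, hi])
  have herror : ∀ j, (f - ftilde) ⬝ᵥ ψ j
      = if σsq j ≠ 0 then -(D *ᵥ (1 - B) *ᵥ f ⬝ᵥ ψ j / σsq j) else f ⬝ᵥ ψ j := by
    intro j
    rw [sub_dotProduct, hftilde, sum_smul_dotProduct_of_orthonormal horth]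
    by_cases hj : σsq j ≠ 0
    · simp only [Finset.mem_filter, Finset.mem_univ, true_and, if_pos hj]
      rw [mulVec_dotProduct_eq_of_mulVec_eq_smul hBsym hDsym (hBψ j hj) (heig j) f]
      field_simp
      ring
    · simp [hj]
  have hout : ∀ j, (1 - B) *ᵥ f ⬝ᵥ ψ j = if σsq j ≠ 0 then 0 else f ⬝ᵥ ψ j := by
    intro j
    rw [mulVec_dotProduct_of_isSymm (isSymm_one.sub hBsym), sub_mulVec, one_mulVec,
      dotProduct_sub]
    by_cases hj : σsq j ≠ 0
    · simp [hj, hBψ j hj]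
    · simp [hj, hBψ₀ j (not_not.mp hj)]
  simp only [sqNorm, dotProduct_self_eq_sum_sq_of_orthonormal horth, herror, hout,
    Finset.sum_filter, ← Finset.sum_add_distrib]
  refine Finset.sum_congr rfl fun j _ => ?_
  split_ifs <;> ring
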